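/- Logarithmic modulus of continuity from borderline Sobolev + maximum principle in 2D: let u ∈ H¹(B) ∩ C(B̄), B the unit disc in ℝ², and suppose osc_{∂B(0,s)} u is nondecreasing in s ∈ (0,1) and max/min over B(0,s) are attained on ∂B(0,s). Then for all r ∈ (0,1), osc_{B(0,r)} u ≤ C (−log r)^{−1/2} ‖∇u‖_{L²(B)} with a universal constant C. -/

import Mathlib

/-! For `r < s < 1` the maximum principle gives `osc_{B_r} u ≤ osc_{∂B_s} u`, and the fundamental
theorem of calculus along the circle of radius `s` together with Cauchy–Schwarz gives
`(osc_{∂B_s} u)² ≤ 2π s ∫_{-π}^{π} s |∇u(s e^{iθ})|² dθ`. Dividing by `2π s` and integrating over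
`s ∈ (r, 1)` in polar coordinates yields `(osc_{B_r} u)² · (-log r) ≤ 2π ∫_B |∇u|²`, i.e. the
theorem with `C = √(2π)`. -/

open Metric MeasureTheory Real Set
open scoped ENNReal Interval

lemma sub_le_integral_abs_deriv {f f' : ℝ → ℝ} {a b x y : ℝ}
    (hf : ∀ t ∈ Icc a b, HasDerivAt f (f' t) t) (hf' : IntervalIntegrable f' volume a b)
    (hx : x ∈ Icc a b) (hy : y ∈ Icc a b) :
    f y - f x ≤ ∫ t in a..b, |f' t| := by
  have hab : a ≤ b := hx.1.trans hx.2
  have hxy : [[x, y]] ⊆ [[a, b]] := by rw [uIcc_of_le hab]; exact uIcc_subset_Icc hx hy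
  rw [← intervalIntegral.integral_eq_sub_of_hasDerivAt
    (fun t ht => hf t (uIcc_of_le hab ▸ hxy ht)) (hf'.mono_set hxy)]
  calc (∫ t in x..y, f' t) ≤ ∫ t in Ι x y, |f' t| :=
        (le_abs_self _).trans (by simpa only [Real.norm_eq_abs] using
          intervalIntegral.norm_integral_le_integral_norm_uIoc (f := f') (μ := volume))
    _ ≤ ∫ t in Ioc a b, |f' t| :=
        setIntegral_mono_set ((intervalIntegrable_iff_integrableOn_Ioc_of_le hab).1 hf').abs
          (.of_forall fun _ => abs_nonneg _)
          (uIoc_of_le hab ▸ uIoc_subset_uIoc_of_uIcc_subset_uIcc hxy).eventuallyLE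
    _ = ∫ t in a..b, |f' t| := (intervalIntegral.integral_of_le hab).symm

-- Expand `0 ≤ ∫ ((b - a) g - ∫ g)²`.
lemma sq_intervalIntegral_le {g : ℝ → ℝ} {a b : ℝ} (hab : a ≤ b)
    (hg : IntervalIntegrable g volume a b)
    (hg2 : IntervalIntegrable (fun t => g t ^ 2) volume a b) :
    (∫ t in a..b, g t) ^ 2 ≤ (b - a) * ∫ t in a..b, g t ^ 2 := by
  rcases hab.lt_or_eq with hlt | rfl
  · obtain ⟨m, hm⟩ : ∃ m, m = ∫ t in a..b, g t := ⟨_, rfl⟩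
    have hexpand : ∫ t in a..b, ((b - a) * g t - m) ^ 2 =
        (b - a) * ((b - a) * (∫ t in a..b, g t ^ 2) - m ^ 2) := by
      have h : ∀ t, ((b - a) * g t - m) ^ 2 =
          (b - a) ^ 2 * g t ^ 2 - 2 * (b - a) * m * g t + m ^ 2 := fun t => by ring
      simp_rw [h]
      rw [intervalIntegral.integral_add ((hg2.const_mul _).sub (hg.const_mul _))
          intervalIntegrable_const,
        intervalIntegral.integral_sub (hg2.const_mul _) (hg.const_mul _),
        intervalIntegral.integral_const_mul, intervalIntegral.integral_const_mul,
        intervalIntegral.integral_const, smul_eq_mul, ← hm]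
      ring
    have hvar : 0 ≤ ∫ t in a..b, ((b - a) * g t - m) ^ 2 :=
      intervalIntegral.integral_nonneg hab fun _ _ => sq_nonneg _
    rw [hexpand, mul_nonneg_iff_of_pos_left (sub_pos.2 hlt)] at hvar
    rw [← hm]
    linarith
  · simp

lemma ofReal_intervalIntegral_eq_setLIntegral_Ioo {h : ℝ → ℝ} {a b : ℝ} (hab : a ≤ b)
    (hh : IntervalIntegrable h volume a b) (h0 : ∀ t ∈ Ioo a b, 0 ≤ h t) :
    ENNReal.ofReal (∫ t in a..b, h t) = ∫⁻ t in Ioo a b, ENNReal.ofReal (h t) := by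
  rw [intervalIntegral.integral_of_le hab, integral_Ioc_eq_integral_Ioo,
    ofReal_integral_eq_lintegral_ofReal
      (((intervalIntegrable_iff_integrableOn_Ioc_of_le hab).1 hh).mono_set Ioo_subset_Ioc_self)
      ((ae_restrict_iff' measurableSet_Ioo).2 (.of_forall h0))]

lemma setLIntegral_ofReal_inv {a b : ℝ} (ha : 0 < a) (hab : a ≤ b) :
    ∫⁻ s in Ioo a b, ENNReal.ofReal s⁻¹ = ENNReal.ofReal (log (b / a)) := by
  rw [← integral_inv_of_pos ha (ha.trans_le hab)]
  refine (ofReal_intervalIntegral_eq_setLIntegral_Ioo hab ?_ fun s hs => ?_).symm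
  · refine (continuousOn_inv₀.mono fun s hs => ?_).intervalIntegrable
    rw [uIcc_of_le hab] at hs
    exact (ha.trans_le hs.1).ne'
  · exact inv_nonneg.2 (ha.trans hs.1).le

section Oscillation

variable {α : Type*}

noncomputable def osc (u : α → ℝ) (s : Set α) : ℝ := sSup (u '' s) - sInf (u '' s)

lemma osc_nonneg {u : α → ℝ} {s : Set α} (hs : s.Nonempty) (hu : Bornology.IsBounded (u '' s)) :
    0 ≤ osc u s :=
  sub_nonneg.2 (csInf_le_csSup (hs.image u) hu.bddBelow hu.bddAbove)

lemma osc_mono {u : α → ℝ} {s t : Set α} (hst : s ⊆ t) (hs : s.Nonempty)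
    (ht : Bornology.IsBounded (u '' t)) : osc u s ≤ osc u t :=
  sub_le_sub (csSup_le_csSup ht.bddAbove (hs.image u) (image_mono hst))
    (csInf_le_csInf ht.bddBelow (hs.image u) (image_mono hst))

end Oscillation

local notation "ℝ²" => EuclideanSpace ℝ (Fin 2)

noncomputable def planeCircleMap (R θ : ℝ) : ℝ² :=
  Complex.orthonormalBasisOneI.repr (circleMap 0 R θ)

lemma norm_planeCircleMap (R θ : ℝ) : ‖planeCircleMap R θ‖ = |R| := by
  simp [planeCircleMap]

lemma image_planeCircleMap_Ioc (R : ℝ) : planeCircleMap R '' Ioc (-π) π = sphere 0 |R| := by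
  have := (periodic_circleMap 0 R).image_Ioc two_pi_pos (-π)
  rw [show -π + 2 * π = π by ring, range_circleMap] at this
  rw [show planeCircleMap R = Complex.orthonormalBasisOneI.repr ∘ circleMap 0 R from rfl,
    image_comp, this]
  simp

lemma hasDerivAt_planeCircleMap (R θ : ℝ) :
    HasDerivAt (planeCircleMap R)
      (Complex.orthonormalBasisOneI.repr (circleMap 0 R θ * Complex.I)) θ :=
  Complex.orthonormalBasisOneI.repr.toContinuousLinearEquiv.hasFDerivAt.comp_hasDerivAt θ
    (hasDerivAt_circleMap 0 R θ)

lemma planeCircleMap_mem_sphere {R : ℝ} (hR : 0 ≤ R) (θ : ℝ) : planeCircleMap R θ ∈ sphere 0 R := by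
  rw [mem_sphere_zero_iff_norm, norm_planeCircleMap, abs_of_nonneg hR]

lemma continuous_planeCircleMap (R : ℝ) : Continuous (planeCircleMap R) :=
  Complex.orthonormalBasisOneI.repr.continuous.comp (continuous_circleMap 0 R)

lemma continuous_uncurry_planeCircleMap : Continuous (Function.uncurry planeCircleMap) := by
  unfold Function.uncurry planeCircleMap circleMap
  fun_prop

lemma lintegral_comp_planeCircleMap (f : ℝ² → ℝ≥0∞) :
    ∫⁻ p in polarCoord.target, ENNReal.ofReal p.1 * f (planeCircleMap p.1 p.2) = ∫⁻ x, f x := by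
  rw [← Complex.orthonormalBasisOneI.measurePreserving_repr.lintegral_comp_emb
    Complex.orthonormalBasisOneI.repr.toHomeomorph.measurableEmbedding,
    ← Complex.lintegral_comp_polarCoord_symm]
  refine setLIntegral_congr_fun polarCoord.open_target.measurableSet fun p _ => ?_
  simp [planeCircleMap, circleMap, Complex.exp_mul_I, ← Complex.ofReal_cos, ← Complex.ofReal_sin]

lemma lintegral_lintegral_planeCircleMap_le {f : ℝ² → ℝ≥0∞} (hf : Measurable f) (R : ℝ) :
    ∫⁻ s in Ioo 0 R, ∫⁻ θ in Ioo (-π) π, ENNReal.ofReal s * f (planeCircleMap s θ) ≤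
      ∫⁻ x in ball 0 R, f x := by
  have hsub : Ioo 0 R ×ˢ Ioo (-π) π ⊆ polarCoord.target :=
    prod_mono Ioo_subset_Ioi_self subset_rfl
  calc ∫⁻ s in Ioo 0 R, ∫⁻ θ in Ioo (-π) π, ENNReal.ofReal s * f (planeCircleMap s θ)
      = ∫⁻ p in Ioo 0 R ×ˢ Ioo (-π) π, ENNReal.ofReal p.1 * f (planeCircleMap p.1 p.2) := by
        rw [Measure.volume_eq_prod, ← Measure.prod_restrict, lintegral_prod]
        exact (measurable_fst.ennreal_ofReal.mul
          (hf.comp continuous_uncurry_planeCircleMap.measurable)).aemeasurable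
    _ = ∫⁻ p in Ioo 0 R ×ˢ Ioo (-π) π,
          ENNReal.ofReal p.1 * (ball 0 R).indicator f (planeCircleMap p.1 p.2) := by
        refine setLIntegral_congr_fun (measurableSet_Ioo.prod measurableSet_Ioo) fun p hp => ?_
        rw [indicator_of_mem (by simpa [norm_planeCircleMap, abs_of_pos hp.1.1] using hp.1.2)]
    _ ≤ ∫⁻ p in polarCoord.target,
          ENNReal.ofReal p.1 * (ball 0 R).indicator f (planeCircleMap p.1 p.2) :=
        lintegral_mono_set hsub
    _ = ∫⁻ x in ball 0 R, f x := by
        rw [lintegral_comp_planeCircleMap, lintegral_indicator measurableSet_ball]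

lemma continuous_fderiv_comp_planeCircleMap {U : Set ℝ²} (hU : IsOpen U) {u : ℝ² → ℝ}
    (hu : ContDiffOn ℝ 1 u U) {s : ℝ} (hs : 0 ≤ s) (hsU : sphere 0 s ⊆ U) :
    Continuous fun θ => fderiv ℝ u (planeCircleMap s θ) :=
  (hu.continuousOn_fderiv_of_isOpen hU le_rfl).comp_continuous (continuous_planeCircleMap s)
    fun θ => hsU (planeCircleMap_mem_sphere hs θ)

lemma osc_sphere_le_integral {U : Set ℝ²} (hU : IsOpen U) {u : ℝ² → ℝ} (hu : ContDiffOn ℝ 1 u U)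
    {s : ℝ} (hs : 0 ≤ s) (hsU : sphere 0 s ⊆ U) :
    osc u (sphere 0 s) ≤ ∫ θ in (-π)..π, s * ‖fderiv ℝ u (planeCircleMap s θ)‖ := by
  have hDu := continuous_fderiv_comp_planeCircleMap hU hu hs hsU
  set γ' := fun θ => Complex.orthonormalBasisOneI.repr (circleMap 0 s θ * Complex.I)
  have hderiv : ∀ θ, HasDerivAt (fun θ => u (planeCircleMap s θ))
      (fderiv ℝ u (planeCircleMap s θ) (γ' θ)) θ := fun θ =>
    ((hu.differentiableOn one_ne_zero).differentiableAt
      (hU.mem_nhds (hsU (planeCircleMap_mem_sphere hs θ)))).hasFDerivAt.comp_hasDerivAt θ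
      (hasDerivAt_planeCircleMap s θ)
  have hbound : ∀ θ, |fderiv ℝ u (planeCircleMap s θ) (γ' θ)| ≤
      s * ‖fderiv ℝ u (planeCircleMap s θ)‖ := fun θ =>
    ((fderiv ℝ u _).le_opNorm _).trans_eq (by simp [γ', abs_of_nonneg hs, mul_comm])
  have hγ' : Continuous γ' := by
    unfold γ' circleMap
    fun_prop
  have hne : (sphere (0 : ℝ²) s).Nonempty := NormedSpace.sphere_nonempty.2 hs
  obtain ⟨x, hx, hsup⟩ :=
    (isCompact_sphere 0 s).exists_sSup_image_eq hne (hu.continuousOn.mono hsU)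
  obtain ⟨y, hy, hinf⟩ :=
    (isCompact_sphere 0 s).exists_sInf_image_eq hne (hu.continuousOn.mono hsU)
  rw [← abs_of_nonneg hs, ← image_planeCircleMap_Ioc] at hx hy
  obtain ⟨θx, hθx, rfl⟩ := hx
  obtain ⟨θy, hθy, rfl⟩ := hy
  rw [osc, hsup, hinf]
  calc _ ≤ ∫ θ in (-π)..π, |fderiv ℝ u (planeCircleMap s θ) (γ' θ)| :=
        sub_le_integral_abs_deriv (fun θ _ => hderiv θ) ((hDu.clm_apply hγ').intervalIntegrable _ _)
          (Ioc_subset_Icc_self hθy) (Ioc_subset_Icc_self hθx)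
    _ ≤ _ := intervalIntegral.integral_mono_on (by linarith [pi_pos])
        ((hDu.clm_apply hγ').abs.intervalIntegrable _ _)
        ((continuous_const.mul hDu.norm).intervalIntegrable _ _) fun θ _ => hbound θ

lemma sq_osc_sphere_le {U : Set ℝ²} (hU : IsOpen U) {u : ℝ² → ℝ} (hu : ContDiffOn ℝ 1 u U)
    {s : ℝ} (hs : 0 ≤ s) (hsU : sphere 0 s ⊆ U) :
    osc u (sphere 0 s) ^ 2 ≤
      2 * π * (s * ∫ θ in (-π)..π, s * ‖fderiv ℝ u (planeCircleMap s θ)‖ ^ 2) := by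
  have hDu := (continuous_fderiv_comp_planeCircleMap hU hu hs hsU).norm
  have hosc : 0 ≤ osc u (sphere 0 s) :=
    osc_nonneg (NormedSpace.sphere_nonempty.2 hs)
      ((isCompact_sphere 0 s).image_of_continuousOn (hu.continuousOn.mono hsU)).isBounded
  calc osc u (sphere 0 s) ^ 2
      ≤ (∫ θ in (-π)..π, s * ‖fderiv ℝ u (planeCircleMap s θ)‖) ^ 2 :=
        pow_le_pow_left₀ hosc (osc_sphere_le_integral hU hu hs hsU) 2
    _ ≤ (π - -π) * ∫ θ in (-π)..π, (s * ‖fderiv ℝ u (planeCircleMap s θ)‖) ^ 2 :=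
        sq_intervalIntegral_le (by linarith [pi_pos])
          ((continuous_const.mul hDu).intervalIntegrable _ _)
          (((continuous_const.mul hDu).pow 2).intervalIntegrable _ _)
    _ = _ := by
        simp_rw [mul_pow, sq s, mul_assoc s, intervalIntegral.integral_const_mul]
        ring

lemma ofReal_sq_div_mul_inv_le_lintegral_circle {U : Set ℝ²} (hU : IsOpen U) {u : ℝ² → ℝ}
    (hu : ContDiffOn ℝ 1 u U) {s O : ℝ} (hs : 0 < s) (hsU : sphere 0 s ⊆ U) (hO : 0 ≤ O)
    (hOs : O ≤ osc u (sphere 0 s)) :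
    ENNReal.ofReal (O ^ 2 / (2 * π)) * ENNReal.ofReal s⁻¹ ≤ ∫⁻ θ in Ioo (-π) π,
      ENNReal.ofReal s * ENNReal.ofReal (‖fderiv ℝ u (planeCircleMap s θ)‖ ^ 2) := by
  have hDu := (continuous_fderiv_comp_planeCircleMap hU hu hs.le hsU).norm
  have hsq := (pow_le_pow_left₀ hO hOs 2).trans (sq_osc_sphere_le hU hu hs.le hsU)
  simp_rw [← ENNReal.ofReal_mul hs.le]
  rw [← ofReal_intervalIntegral_eq_setLIntegral_Ioo
      (h := fun θ => s * ‖fderiv ℝ u (planeCircleMap s θ)‖ ^ 2) (by linarith [pi_pos])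
      ((continuous_const.mul (hDu.pow 2)).intervalIntegrable _ _) fun θ _ => by positivity,
    ← ENNReal.ofReal_mul (by positivity)]
  refine ENNReal.ofReal_le_ofReal ?_
  rw [div_mul_eq_mul_div, div_le_iff₀ (by positivity), ← div_eq_mul_inv, div_le_iff₀ hs]
  linarith

theorem sq_mul_log_le_two_pi_mul_integral {u : ℝ² → ℝ} {R : ℝ} (hu : ContDiffOn ℝ 1 u (ball 0 R))
    (hi : IntegrableOn (fun x => ‖fderiv ℝ u x‖ ^ 2) (ball 0 R)) {r O : ℝ} (hr : 0 < r)
    (hrR : r ≤ R) (hO : 0 ≤ O) (hOs : ∀ s ∈ Ioo r R, O ≤ osc u (sphere 0 s)) :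
    O ^ 2 * log (R / r) ≤ 2 * π * ∫ x in ball 0 R, ‖fderiv ℝ u x‖ ^ 2 := by
  have hmeas : Measurable fun x : ℝ² => ENNReal.ofReal (‖fderiv ℝ u x‖ ^ 2) :=
    ((measurable_fderiv ℝ u).norm.pow_const 2).ennreal_ofReal
  have key : ENNReal.ofReal (O ^ 2 / (2 * π) * log (R / r)) ≤
      ENNReal.ofReal (∫ x in ball 0 R, ‖fderiv ℝ u x‖ ^ 2) :=
    calc ENNReal.ofReal (O ^ 2 / (2 * π) * log (R / r))
        = ∫⁻ s in Ioo r R, ENNReal.ofReal (O ^ 2 / (2 * π)) * ENNReal.ofReal s⁻¹ := by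
          rw [lintegral_const_mul' _ _ ENNReal.ofReal_ne_top, setLIntegral_ofReal_inv hr hrR,
            ENNReal.ofReal_mul (by positivity)]
      _ ≤ ∫⁻ s in Ioo r R, ∫⁻ θ in Ioo (-π) π,
            ENNReal.ofReal s * ENNReal.ofReal (‖fderiv ℝ u (planeCircleMap s θ)‖ ^ 2) :=
          setLIntegral_mono' measurableSet_Ioo fun s hs =>
            ofReal_sq_div_mul_inv_le_lintegral_circle isOpen_ball hu (hr.trans hs.1)
              (sphere_subset_ball hs.2) hO (hOs s hs)
      _ ≤ ∫⁻ s in Ioo 0 R, ∫⁻ θ in Ioo (-π) π,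
            ENNReal.ofReal s * ENNReal.ofReal (‖fderiv ℝ u (planeCircleMap s θ)‖ ^ 2) :=
          lintegral_mono_set (Ioo_subset_Ioo_left hr.le)
      _ ≤ ∫⁻ x in ball 0 R, ENNReal.ofReal (‖fderiv ℝ u x‖ ^ 2) :=
          lintegral_lintegral_planeCircleMap_le hmeas R
      _ = _ := (ofReal_integral_eq_lintegral_ofReal hi (.of_forall fun x => by positivity)).symm
  rw [ENNReal.ofReal_le_ofReal_iff (setIntegral_nonneg measurableSet_ball fun _ _ => by positivity),
    div_mul_eq_mul_div, div_le_iff₀ (by positivity)] at key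
  linarith

lemma le_sqrt_mul_rpow_of_sq_mul_le {O a K I : ℝ} (hO : 0 ≤ O) (ha : 0 < a) (hK : 0 ≤ K)
    (h : O ^ 2 * a ≤ K * I) : O ≤ √K * a ^ (-(1 / 2 : ℝ)) * I ^ (1 / 2 : ℝ) := by
  rw [← Real.sqrt_eq_rpow, Real.rpow_neg ha.le, ← Real.sqrt_eq_rpow]
  calc O = √(O ^ 2) := (Real.sqrt_sq hO).symm
    _ ≤ √(K * I / a) := Real.sqrt_le_sqrt ((le_div_iff₀ ha).2 h)
    _ = _ := by rw [Real.sqrt_div' _ ha.le, Real.sqrt_mul hK]; ring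

theorem stmt_13 :
    ∃ C > 0, ∀ u : EuclideanSpace ℝ (Fin 2) → ℝ,
      ContDiffOn ℝ 1 u (ball (0 : EuclideanSpace ℝ (Fin 2)) 1) →
      IntegrableOn (fun x => ‖fderiv ℝ u x‖ ^ 2) (ball (0 : EuclideanSpace ℝ (Fin 2)) 1) →
      (∀ s ∈ Set.Ioo (0:ℝ) 1,
        sSup (u '' ball (0 : EuclideanSpace ℝ (Fin 2)) s) =
          sSup (u '' sphere (0 : EuclideanSpace ℝ (Fin 2)) s) ∧
        sInf (u '' ball (0 : EuclideanSpace ℝ (Fin 2)) s) =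
          sInf (u '' sphere (0 : EuclideanSpace ℝ (Fin 2)) s)) →
      ∀ r ∈ Set.Ioo (0:ℝ) 1,
        sSup (u '' ball (0 : EuclideanSpace ℝ (Fin 2)) r) -
          sInf (u '' ball (0 : EuclideanSpace ℝ (Fin 2)) r) ≤
        C * (-Real.log r) ^ (-(1/2 : ℝ)) *
          (∫ x in ball (0 : EuclideanSpace ℝ (Fin 2)) 1, ‖fderiv ℝ u x‖ ^ 2) ^ (1/2 : ℝ) := by
  refine ⟨√(2 * π), by positivity, fun u hu hi hext r hr => ?_⟩
  have hbdd : ∀ s < 1, Bornology.IsBounded (u '' ball 0 s) := fun s hs =>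
    ((isCompact_closedBall 0 s).image_of_continuousOn
      (hu.continuousOn.mono (closedBall_subset_ball hs))).isBounded.subset
      (image_mono ball_subset_closedBall)
  have hosc : ∀ s ∈ Ioo r 1, osc u (ball 0 r) ≤ osc u (sphere 0 s) := fun s hs => by
    obtain ⟨hsup, hinf⟩ := hext s ⟨hr.1.trans hs.1, hs.2⟩
    have := osc_mono (u := u) (ball_subset_ball hs.1.le) (nonempty_ball.2 hr.1) (hbdd s hs.2)
    rwa [osc, osc, hsup, hinf] at this
  have hO := osc_nonneg (nonempty_ball.2 hr.1) (hbdd r hr.2)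
  have key := sq_mul_log_le_two_pi_mul_integral hu hi hr.1 hr.2.le hO hosc
  rw [one_div, log_inv] at key
  exact le_sqrt_mul_rpow_of_sq_mul_le hO (neg_pos.2 (log_neg hr.1 hr.2)) two_pi_pos.le key
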